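/- Let q ≥ 2 be an integer and A ⊆ ℕ a set of indices with upper density limsup_{N→∞} #(A ∩ [0,N])/N = t. Then the set F = { Σ_{m=1}^∞ x_m q^{-m} : x_m ∈ {0,…,q−1}, and x_m = 0 if m ∉ A } is a compact subset of [0,1] whose packing dimension (and upper box dimension) equals t. -/

import Mathlib

open Filter Set Metric Bornology

/-- Minimal number of δ-balls needed to cover `E`. -/
noncomputable def coveringNumber {X : Type*} [PseudoMetricSpace X] (E : Set X) (δ : ℝ) : ℕ :=
  sInf {n : ℕ | ∃ s : Finset X, s.card = n ∧ E ⊆ ⋃ x ∈ s, Metric.ball x δ}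

/-- Upper box dimension: limsup of log N(E,δ) / (-log δ) as δ → 0⁺. -/
noncomputable def ubdim {X : Type*} [PseudoMetricSpace X] (E : Set X) : ℝ :=
  Filter.limsup (fun δ : ℝ => Real.log (coveringNumber E δ) / (-Real.log δ))
    (nhdsWithin 0 (Set.Ioi 0))

/-- Packing dimension via countable covers by bounded sets. -/
noncomputable def pdim {X : Type*} [PseudoMetricSpace X] (E : Set X) : ℝ :=
  sInf {a : ℝ | ∃ C : ℕ → Set X, (E ⊆ ⋃ i, C i) ∧ (∀ i, IsBounded (C i)) ∧
    ∀ i, ubdim (C i) ≤ a}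

/-- The set of numbers `∑ x_m q^{-m}` whose base-`q` digits are supported on `A`. -/
def digitSet (q : ℕ) (A : Set ℕ) : Set ℝ :=
  {x : ℝ | ∃ f : ℕ → ℕ, (∀ m, f m < q) ∧ (∀ m, m ∉ A → f m = 0) ∧
    x = ∑' m : ℕ, (f m : ℝ) / (q : ℝ) ^ (m + 1)}

/-!
At scale `q⁻ⁿ` the set `F` has a net of `q ^ #(A ∩ [0, n))` points, pairwise at distance at
least `q⁻ⁿ`, obtained by choosing the free digits below `n`; every point of `F` lies within `q⁻ⁿ`
of the net. Hence `log N(F, q⁻ⁿ) ≈ #(A ∩ [0, n)) · log q`, and the upper box dimension is the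
upper density `t`. The same count, up to `k` digits, holds for every cylinder of `F` (digits fixed
below `k`). By Baire's theorem, one member of any countable cover of the compact set `F` has a
closure containing such a cylinder, so every cover has a member of upper box dimension at least
`t`; this gives the packing dimension.
-/

open Topology

namespace Real

variable {q : ℕ}

lemma pow_mul_sum_ofDigitsTerm (u : ℕ → Fin q) (n : ℕ) :
    (q : ℝ) ^ n * ∑ i ∈ Finset.range n, ofDigitsTerm u i =
      (finFunctionFinEquiv (fun i : Fin n => u (Fin.rev i)) : ℕ) := by
  have hq : (q : ℝ) ≠ 0 := by exact_mod_cast (u 0).pos.ne'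
  rw [finFunctionFinEquiv_apply, ← Equiv.sum_comp Fin.revPerm, Finset.mul_sum]
  push_cast
  rw [← Fin.sum_univ_eq_sum_range (fun i => (q : ℝ) ^ n * ofDigitsTerm u i)]
  refine Finset.sum_congr rfl fun i _ => ?_
  simp only [Fin.revPerm_apply, Fin.rev_rev, Fin.val_rev, ofDigitsTerm]
  rw [show (q : ℝ) ^ n = q ^ (n - ((i : ℕ) + 1)) * q ^ ((i : ℕ) + 1) by
    rw [← pow_add]; congr 1; omega]
  field_simp

/-- `q ^ n` times the difference is a nonzero integer, by uniqueness of base-`q` expansions. -/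
lemma inv_pow_le_dist_ofDigits {u v : ℕ → Fin q} {n : ℕ} (hge : ∀ m, n ≤ m → u m = v m)
    (hlt : ∃ m < n, u m ≠ v m) : ((q : ℝ) ^ n)⁻¹ ≤ dist (ofDigits u) (ofDigits v) := by
  have hq : (0 : ℝ) < q := by exact_mod_cast (u 0).pos
  have htail : (fun i => u (i + n)) = fun i => v (i + n) := funext fun i => hge _ (by omega)
  have hne : ((finFunctionFinEquiv (fun i : Fin n => u (Fin.rev i)) : ℕ) : ℤ) ≠
      (finFunctionFinEquiv (fun i : Fin n => v (Fin.rev i)) : ℕ) := by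
    obtain ⟨m, hm, huv⟩ := hlt
    intro h
    have := congrFun (finFunctionFinEquiv.injective (Fin.ext (by exact_mod_cast h)))
      (Fin.rev ⟨m, hm⟩)
    simp [huv] at this
  have hint : (1 : ℝ) ≤ |(q : ℝ) ^ n * (ofDigits u - ofDigits v)| := by
    rw [ofDigits_eq_sum_add_ofDigits u n, ofDigits_eq_sum_add_ofDigits v n, htail,
      add_sub_add_right_eq_sub, mul_sub, pow_mul_sum_ofDigitsTerm, pow_mul_sum_ofDigitsTerm]
    exact_mod_cast Int.one_le_abs (sub_ne_zero.2 hne)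
  rw [abs_mul, abs_of_pos (by positivity)] at hint
  rw [dist_eq, inv_le_iff_one_le_mul₀' (by positivity)]
  exact hint

end Real

section CoveringNumber

variable {X : Type*} [PseudoMetricSpace X] {E : Set X} {δ : ℝ}

lemma coveringNumber_le_card {s : Finset X} (h : E ⊆ ⋃ x ∈ s, ball x δ) :
    coveringNumber E δ ≤ s.card := by
  exact Nat.sInf_le ⟨s, rfl, h⟩

lemma exists_finset_card_eq_coveringNumber (hE : TotallyBounded E) (hδ : 0 < δ) :
    ∃ s : Finset X, s.card = coveringNumber E δ ∧ E ⊆ ⋃ x ∈ s, ball x δ := by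
  obtain ⟨t, ht, hEt⟩ := Metric.totallyBounded_iff.1 hE δ hδ
  exact Nat.sInf_mem (s := {n | ∃ s : Finset X, s.card = n ∧ E ⊆ ⋃ x ∈ s, ball x δ})
    ⟨_, ht.toFinset, rfl, by simpa using hEt⟩

lemma card_le_coveringNumber (hE : TotallyBounded E) (hδ : 0 < δ) {S : Finset X}
    (hS : ↑S ⊆ closure E) (hsep : ∀ x ∈ S, ∀ y ∈ S, x ≠ y → 2 * δ < dist x y) :
    S.card ≤ coveringNumber E δ := by
  obtain ⟨s, hs, hEs⟩ := exists_finset_card_eq_coveringNumber hE hδ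
  have hclosure : closure E ⊆ ⋃ c ∈ s, closedBall c δ :=
    closure_minimal (hEs.trans (iUnion₂_mono fun _ _ => ball_subset_closedBall))
      (s.finite_toSet.isClosed_biUnion fun _ _ => isClosed_closedBall)
  have hcenter : ∀ x ∈ S, ∃ c ∈ s, dist x c ≤ δ := fun x hx => by
    simpa using hclosure (hS hx)
  choose! c hcs hxc using hcenter
  rw [← hs]
  refine Finset.card_le_card_of_injOn c (fun x hx => hcs x hx) fun x hx y hy hxy => ?_
  by_contra hne
  linarith [hsep x hx y hy hne, dist_triangle_right x y (c y), hxy ▸ hxc x hx, hxc y hy]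

variable (E) in
noncomputable def boxRatio (δ : ℝ) : ℝ :=
  Real.log (coveringNumber E δ) / (-Real.log δ)

lemma boxRatio_nonneg (hδ₀ : 0 < δ) (hδ₁ : δ < 1) : 0 ≤ boxRatio E δ :=
  div_nonneg (Real.log_natCast_nonneg _) (neg_nonneg.2 (Real.log_nonpos hδ₀.le hδ₁.le))

lemma isCoboundedUnder_boxRatio : IsCoboundedUnder (· ≤ ·) (𝓝[>] 0) (boxRatio E) :=
  isCoboundedUnder_le_of_eventually_le _ <| by
    filter_upwards [Ioo_mem_nhdsGT one_pos] with δ hδ using boxRatio_nonneg hδ.1 hδ.2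

end CoveringNumber

section RealLine

variable {E : Set ℝ}

lemma coveringNumber_le_of_subset_Icc {a b δ : ℝ} (hE : E ⊆ Icc a b) (hδ : 0 < δ) :
    coveringNumber E δ ≤ ⌊(b - a) / δ⌋₊ + 1 := by
  let s := (Finset.range (⌊(b - a) / δ⌋₊ + 1)).image fun i : ℕ => a + δ * i
  have hcover : E ⊆ ⋃ y ∈ s, ball y δ := fun x hx => by
    obtain ⟨hax, hxb⟩ := hE hx
    set i := ⌊(x - a) / δ⌋₊
    have hib : i ≤ ⌊(b - a) / δ⌋₊ := Nat.floor_le_floor (by gcongr)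
    have hlo := Nat.floor_le (div_nonneg (sub_nonneg.2 hax) hδ.le)
    have hhi := Nat.lt_floor_add_one ((x - a) / δ)
    rw [le_div_iff₀ hδ] at hlo
    rw [div_lt_iff₀ hδ] at hhi
    refine mem_iUnion₂.2 ⟨a + δ * i, Finset.mem_image.2 ⟨i, by simp; omega, rfl⟩, ?_⟩
    rw [mem_ball, Real.dist_eq, abs_lt]
    constructor <;> nlinarith
  exact (coveringNumber_le_card hcover).trans
    (Finset.card_image_le.trans (Finset.card_range _).le)

lemma isBoundedUnder_boxRatio (hE : IsBounded E) :
    IsBoundedUnder (· ≤ ·) (𝓝[>] 0) (boxRatio E) := by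
  obtain ⟨R, hR, hER⟩ := hE.subset_closedBall_lt 0 0
  rw [Real.closedBall_eq_Icc, zero_sub, zero_add] at hER
  refine ⟨2, eventually_map.2 ?_⟩
  filter_upwards [Ioo_mem_nhdsGT (show (0 : ℝ) < min 1 (2 * R + 1)⁻¹ by positivity)]
    with δ ⟨hδ₀, hδ⟩
  have hδ₁ : δ < 1 := hδ.trans_le (min_le_left _ _)
  have hδR : δ * (2 * R + 1) < 1 := by
    have := hδ.trans_le (min_le_right _ _)
    rwa [← one_div, lt_div_iff₀ (by positivity)] at this
  have hcount : (coveringNumber E δ : ℝ) ≤ δ⁻¹ * δ⁻¹ :=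
    calc (coveringNumber E δ : ℝ) ≤ ⌊(R - -R) / δ⌋₊ + 1 := by
          exact_mod_cast coveringNumber_le_of_subset_Icc hER hδ₀
      _ ≤ (R - -R) / δ + 1 := by
          gcongr; exact Nat.floor_le (div_nonneg (by linarith) hδ₀.le)
      _ ≤ δ⁻¹ * δ⁻¹ := by
          rw [div_add_one hδ₀.ne', ← div_eq_inv_mul, div_le_div_iff_of_pos_right hδ₀,
            ← one_div, le_div_iff₀ hδ₀]
          nlinarith
  have hlog : Real.log (coveringNumber E δ) ≤ 2 * -Real.log δ := by
    rcases (Nat.zero_le (coveringNumber E δ)).eq_or_lt with h | h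
    · rw [← h, Nat.cast_zero, Real.log_zero]
      linarith [Real.log_neg hδ₀ hδ₁]
    · calc Real.log (coveringNumber E δ) ≤ Real.log (δ⁻¹ * δ⁻¹) :=
            Real.log_le_log (by exact_mod_cast h) hcount
        _ = 2 * -Real.log δ := by
            rw [Real.log_mul (by positivity) (by positivity), Real.log_inv]; ring
  exact div_le_of_le_mul₀ (neg_nonneg.2 (Real.log_nonpos hδ₀.le hδ₁.le)) zero_le_two hlog

end RealLine

def freeDigitSet {q : ℕ} (a : ℕ → Fin q) (B : Set ℕ) : Set ℝ :=
  Real.ofDigits '' {b | EqOn b a Bᶜ}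

section FreeDigitSet

variable {q : ℕ}

lemma freeDigitSet_subset_freeDigitSet {a a' : ℕ → Fin q} {B B' : Set ℕ} (hB : B' ⊆ B)
    (ha : EqOn a a' Bᶜ) : freeDigitSet a B' ⊆ freeDigitSet a' B := by
  rintro _ ⟨b, hb, rfl⟩
  exact ⟨b, fun m hm => (hb (compl_subset_compl.2 hB hm)).trans (ha hm), rfl⟩

variable (a : ℕ → Fin q) (B : Set ℕ)

lemma isCompact_freeDigitSet : IsCompact (freeDigitSet a B) := by
  have : IsClosed {b : ℕ → Fin q | EqOn b a Bᶜ} := by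
    simp only [EqOn, ofPred_forall]
    exact isClosed_biInter fun m _ => isClosed_eq (continuous_apply m) continuous_const
  exact this.isCompact.image Real.continuous_ofDigits

lemma freeDigitSet_subset_Icc : freeDigitSet a B ⊆ Icc 0 1 := by
  rintro _ ⟨b, -, rfl⟩
  exact ⟨Real.ofDigits_nonneg b, Real.ofDigits_le_one b⟩

lemma exists_net_freeDigitSet (n : ℕ) :
    ∃ S : Finset ℝ, S.card = q ^ (B ∩ Iio n).ncard ∧ ↑S ⊆ freeDigitSet a B ∧
      (∀ x ∈ S, ∀ y ∈ S, x ≠ y → ((q : ℝ) ^ n)⁻¹ ≤ dist x y) ∧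
      ∀ y ∈ freeDigitSet a B, ∃ x ∈ S, dist y x ≤ ((q : ℝ) ^ n)⁻¹ := by
  classical
  have hq : (0 : ℝ) < q := by exact_mod_cast (a 0).pos
  set T := B ∩ Iio n
  have : Fintype T := ((finite_Iio n).inter_of_right B).fintype
  let extend : (T → Fin q) → ℕ → Fin q := fun v m => if h : m ∈ T then v ⟨m, h⟩ else a m
  have extend_eqOn : ∀ v, EqOn (extend v) a Bᶜ := fun v m hm => dif_neg fun h => hm h.1
  have hsep : ∀ v w, v ≠ w →
      ((q : ℝ) ^ n)⁻¹ ≤ dist (Real.ofDigits (extend v)) (Real.ofDigits (extend w)) := by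
    intro v w hvw
    obtain ⟨⟨m, hm⟩, hne⟩ := Function.ne_iff.1 hvw
    refine Real.inv_pow_le_dist_ofDigits (fun m hnm => ?_) ⟨m, hm.2, ?_⟩
    · have : m ∉ T := fun h => (not_lt.2 hnm) h.2
      simp only [extend, dif_neg this]
    · simpa only [extend, dif_pos hm] using hne
  have hinj : Function.Injective (Real.ofDigits ∘ extend) := fun v w h => by
    by_contra hne
    have := hsep v w hne
    rw [show Real.ofDigits (extend v) = Real.ofDigits (extend w) from h, dist_self] at this
    exact (not_le.2 (by positivity)) this
  refine ⟨Finset.univ.image (Real.ofDigits ∘ extend), ?_, ?_, ?_, ?_⟩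
  · rw [Finset.card_image_of_injective _ hinj, Finset.card_univ, Fintype.card_fun,
      Fintype.card_fin, Set.ncard_eq_toFinset_card', Set.toFinset_card]
  · rintro _ hx
    obtain ⟨v, -, rfl⟩ := Finset.mem_image.1 hx
    exact ⟨extend v, extend_eqOn v, rfl⟩
  · intro x hx y hy hxy
    obtain ⟨v, -, rfl⟩ := Finset.mem_image.1 hx
    obtain ⟨w, -, rfl⟩ := Finset.mem_image.1 hy
    exact hsep v w fun h => hxy (h ▸ rfl)
  · rintro _ ⟨b, hb, rfl⟩
    refine ⟨_, Finset.mem_image_of_mem _ (Finset.mem_univ fun m : T => b m), ?_⟩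
    rw [Real.dist_eq]
    refine Real.abs_ofDigits_sub_ofDigits_le fun m hm => ?_
    by_cases hmT : m ∈ T
    · simp only [extend, dif_pos hmT]
    · simp only [extend, dif_neg hmT]
      exact hb fun hmB => hmT ⟨hmB, hm⟩

lemma coveringNumber_freeDigitSet_le {n : ℕ} {δ : ℝ} (hδ : ((q : ℝ) ^ n)⁻¹ < δ) :
    coveringNumber (freeDigitSet a B) δ ≤ q ^ (B ∩ Iio n).ncard := by
  obtain ⟨S, hcard, -, -, hnet⟩ := exists_net_freeDigitSet a B n
  refine hcard ▸ coveringNumber_le_card fun y hy => ?_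
  obtain ⟨x, hx, hxy⟩ := hnet y hy
  exact mem_iUnion₂.2 ⟨x, hx, hxy.trans_lt hδ⟩

lemma pow_le_coveringNumber_of_freeDigitSet_subset {E : Set ℝ} (hE : TotallyBounded E)
    (hsub : freeDigitSet a B ⊆ closure E) (n : ℕ) :
    q ^ (B ∩ Iio n).ncard ≤ coveringNumber E (((q : ℝ) ^ n)⁻¹ / 3) := by
  obtain ⟨S, hcard, hSsub, hsep, -⟩ := exists_net_freeDigitSet a B n
  have hq : (0 : ℝ) < q := by exact_mod_cast (a 0).pos
  refine hcard ▸ card_le_coveringNumber hE (by positivity) (hSsub.trans hsub)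
    fun x hx y hy hxy => ?_
  have := hsep x hx y hy hxy
  have : (0 : ℝ) < ((q : ℝ) ^ n)⁻¹ := by positivity
  linarith

lemma exists_freeDigitSet_subset_closure (hq : 1 < q) {C : ℕ → Set ℝ}
    (hcov : freeDigitSet a B ⊆ ⋃ i, C i) :
    ∃ i, ∃ a' : ℕ → Fin q, ∃ k, freeDigitSet a' (B ∩ Ici k) ⊆ closure (C i) := by
  set F := freeDigitSet a B
  have : Nonempty F := ⟨⟨_, a, fun _ _ => rfl, rfl⟩⟩
  have : CompleteSpace F := (isCompact_freeDigitSet a B).isClosed.completeSpace_coe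
  obtain ⟨i, x, hx⟩ := nonempty_interior_of_iUnion_of_closed
    (f := fun i => ((↑) : F → ℝ) ⁻¹' closure (C i))
    (fun i => isClosed_closure.preimage continuous_subtype_val)
    (iUnion_eq_univ_iff.2 fun x => (mem_iUnion.1 (hcov x.2)).imp fun _ h => subset_closure h)
  obtain ⟨ε, hε, hball⟩ := Metric.mem_nhds_iff.1 (mem_interior_iff_mem_nhds.1 hx)
  obtain ⟨b, hb, hbx⟩ := x.2
  obtain ⟨k, hk⟩ := pow_unbounded_of_one_lt ε⁻¹ (by exact_mod_cast hq : (1 : ℝ) < q)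
  refine ⟨i, b, k, ?_⟩
  rintro _ ⟨c, hc, rfl⟩
  have hcF : Real.ofDigits c ∈ F :=
    freeDigitSet_subset_freeDigitSet inter_subset_left hb ⟨c, hc, rfl⟩
  refine hball (show (⟨_, hcF⟩ : F) ∈ ball x ε from ?_)
  rw [mem_ball, Subtype.dist_eq, ← hbx, Real.dist_eq]
  refine (Real.abs_ofDigits_sub_ofDigits_le (n := k) fun m hm =>
    hc fun h => not_le.2 hm h.2).trans_lt ?_
  rwa [inv_lt_comm₀ (by positivity) hε]

end FreeDigitSet

lemma digitSet_eq_freeDigitSet {q : ℕ} [NeZero q] (A : Set ℕ) :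
    digitSet q A = freeDigitSet (0 : ℕ → Fin q) A := by
  ext x
  constructor
  · rintro ⟨f, hf, hA, rfl⟩
    refine ⟨fun m => ⟨f m, hf m⟩, fun m hm => Fin.ext (hA m hm), ?_⟩
    simp [Real.ofDigits, Real.ofDigitsTerm, div_eq_mul_inv]
  · rintro ⟨b, hb, rfl⟩
    refine ⟨fun m => b m, fun m => (b m).isLt, fun m hm => by simp [hb hm], ?_⟩
    simp [Real.ofDigits, Real.ofDigitsTerm, div_eq_mul_inv]

noncomputable def partialDensity (A : Set ℕ) (N : ℕ) : ℝ :=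
  ((A ∩ Icc 0 N).ncard : ℝ) / N

noncomputable def upperDensity (A : Set ℕ) : ℝ :=
  limsup (partialDensity A) atTop

section Density

variable (A : Set ℕ)

lemma partialDensity_le_two (N : ℕ) : partialDensity A N ≤ 2 := by
  rcases N.eq_zero_or_pos with rfl | hN
  · simp [partialDensity]
  rw [partialDensity, div_le_iff₀ (by exact_mod_cast hN)]
  have : ((A ∩ Icc 0 N).ncard : ℝ) ≤ N + 1 := by
    exact_mod_cast (Set.ncard_le_ncard inter_subset_right (finite_Icc 0 N)).trans_eq (by simp)
  have : (1 : ℝ) ≤ N := by exact_mod_cast hN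
  linarith

lemma isBoundedUnder_partialDensity : IsBoundedUnder (· ≤ ·) atTop (partialDensity A) :=
  isBoundedUnder_of ⟨2, partialDensity_le_two A⟩

lemma isCoboundedUnder_partialDensity : IsCoboundedUnder (· ≤ ·) atTop (partialDensity A) :=
  isCoboundedUnder_le_of_le atTop fun _ => div_nonneg (Nat.cast_nonneg _) (Nat.cast_nonneg _)

lemma upperDensity_le_two : upperDensity A ≤ 2 :=
  limsup_le_of_le (isCoboundedUnder_partialDensity A)
    (Eventually.of_forall (partialDensity_le_two A))

lemma ncard_inter_Icc_le_add (k N : ℕ) :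
    (A ∩ Icc 0 N).ncard ≤ (A ∩ Ici k ∩ Iio (N + 1)).ncard + k := by
  have hsub : A ∩ Icc 0 N ⊆ (A ∩ Ici k ∩ Iio (N + 1)) ∪ Iio k := by
    rintro m ⟨hmA, -, hmN⟩
    by_cases hmk : k ≤ m
    · exact Or.inl ⟨⟨hmA, hmk⟩, Nat.lt_succ_of_le hmN⟩
    · exact Or.inr (not_le.1 hmk)
  calc (A ∩ Icc 0 N).ncard ≤ ((A ∩ Ici k ∩ Iio (N + 1)) ∪ Iio k).ncard :=
        Set.ncard_le_ncard hsub (((finite_Iio _).inter_of_right _).union (finite_Iio k))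
    _ ≤ (A ∩ Ici k ∩ Iio (N + 1)).ncard + k := (Set.ncard_union_le _ _).trans_eq (by simp)

end Density

section BoxDimension

variable {q : ℕ} (A : Set ℕ)

lemma boxRatio_digitSet_le_partialDensity (hq : 1 < q) {n : ℕ} {δ : ℝ} (hn : 1 ≤ n)
    (hlog : n * Real.log q ≤ -Real.log δ) (hδ : ((q : ℝ) ^ (n + 1))⁻¹ < δ) :
    boxRatio (digitSet q A) δ ≤ partialDensity A n := by
  have : NeZero q := ⟨by omega⟩
  have hlogq : 0 < Real.log q := Real.log_pos (by exact_mod_cast hq)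
  have hIio : A ∩ Iio (n + 1) = A ∩ Icc 0 n := by ext m; simp
  have hcov := coveringNumber_freeDigitSet_le (0 : ℕ → Fin q) A hδ
  rw [hIio, ← digitSet_eq_freeDigitSet] at hcov
  have hlogN :
      Real.log (coveringNumber (digitSet q A) δ) ≤ (A ∩ Icc 0 n).ncard * Real.log q := by
    rcases (coveringNumber (digitSet q A) δ).eq_zero_or_pos with h | h
    · rw [h, Nat.cast_zero, Real.log_zero]; positivity
    · rw [← Real.log_pow, ← Nat.cast_pow]
      exact Real.log_le_log (by exact_mod_cast h) (by exact_mod_cast hcov)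
  calc boxRatio (digitSet q A) δ
      ≤ (A ∩ Icc 0 n).ncard * Real.log q / (n * Real.log q) :=
        div_le_div₀ (by positivity) hlogN (by positivity) hlog
    _ = partialDensity A n := mul_div_mul_right _ _ hlogq.ne'

lemma ubdim_digitSet_le (hq : 1 < q) : ubdim (digitSet q A) ≤ upperDensity A := by
  have hlogq : 0 < Real.log q := Real.log_pos (by exact_mod_cast hq)
  let scale : ℝ → ℕ := fun δ => ⌊-Real.log δ / Real.log q⌋₊
  have hscale : Tendsto scale (𝓝[>] 0) atTop :=
    tendsto_nat_floor_atTop.comp <| (tendsto_neg_atBot_atTop.comp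
      Real.tendsto_log_nhdsGT_zero).atTop_div_const hlogq
  refine le_of_forall_pos_le_add fun ε hε => limsup_le_of_le isCoboundedUnder_boxRatio ?_
  have hdens : ∀ᶠ N in atTop, partialDensity A N < upperDensity A + ε :=
    eventually_lt_of_limsup_lt (by rw [upperDensity]; linarith) (isBoundedUnder_partialDensity A)
  filter_upwards [hscale.eventually (hdens.and (eventually_ge_atTop 1)),
    Ioo_mem_nhdsGT one_pos] with δ ⟨hd, hn⟩ ⟨hδ₀, hδ₁⟩
  have hlogδ : 0 ≤ -Real.log δ / Real.log q :=
    div_nonneg (neg_nonneg.2 (Real.log_nonpos hδ₀.le hδ₁.le)) hlogq.le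
  have hlo : scale δ * Real.log q ≤ -Real.log δ := (le_div_iff₀ hlogq).1 (Nat.floor_le hlogδ)
  have hhi : ((q : ℝ) ^ (scale δ + 1))⁻¹ < δ := by
    have := (div_lt_iff₀ hlogq).1 (Nat.lt_floor_add_one (-Real.log δ / Real.log q))
    rw [← Real.log_lt_log_iff (by positivity) hδ₀, Real.log_inv, Real.log_pow]
    push_cast
    linarith
  exact (boxRatio_digitSet_le_partialDensity A hq hn hlo hhi).trans hd.le

lemma div_le_boxRatio_of_freeDigitSet_subset (hq : 1 < q) {E : Set ℝ} (hE : IsBounded E)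
    {a : ℕ → Fin q} {k : ℕ} (hsub : freeDigitSet a (A ∩ Ici k) ⊆ closure E) (N : ℕ) :
    (((A ∩ Icc 0 N).ncard : ℝ) - k) / (N + 3) ≤ boxRatio E (((q : ℝ) ^ (N + 1))⁻¹ / 3) := by
  have hq₂ : (2 : ℝ) ≤ q := by exact_mod_cast hq
  have hlogq : 0 < Real.log q := Real.log_pos (by linarith)
  set δ := ((q : ℝ) ^ (N + 1))⁻¹ / 3
  have hδ₁ : δ < 1 := by
    have : ((q : ℝ) ^ (N + 1))⁻¹ ≤ 1 := inv_le_one_of_one_le₀ (one_le_pow₀ (by linarith))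
    change ((q : ℝ) ^ (N + 1))⁻¹ / 3 < 1
    linarith
  have hlogδ : -Real.log δ ≤ (N + 3) * Real.log q := by
    have h3 : Real.log 3 ≤ 2 * Real.log q := by
      rw [← Real.log_rpow (by positivity)]
      exact Real.log_le_log (by norm_num) (by norm_num; nlinarith)
    rw [Real.log_div (by positivity) (by norm_num), Real.log_inv, Real.log_pow]
    push_cast
    linarith
  have hcount := pow_le_coveringNumber_of_freeDigitSet_subset a (A ∩ Ici k)
    (hE.isCompact_closure.totallyBounded.subset subset_closure) hsub (N + 1)
  have hlogN : (((A ∩ Icc 0 N).ncard : ℝ) - k) * Real.log q ≤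
      Real.log (coveringNumber E δ) :=
    calc (((A ∩ Icc 0 N).ncard : ℝ) - k) * Real.log q
        ≤ (A ∩ Ici k ∩ Iio (N + 1)).ncard * Real.log q := by
          gcongr
          rw [sub_le_iff_le_add]
          exact_mod_cast ncard_inter_Icc_le_add A k N
      _ ≤ Real.log (coveringNumber E δ) := by
          rw [← Real.log_pow, ← Nat.cast_pow]
          exact Real.log_le_log (by positivity) (Nat.cast_le.2 hcount)
  rcases le_or_gt (((A ∩ Icc 0 N).ncard : ℝ) - k) 0 with hneg | hpos
  · exact (div_nonpos_of_nonpos_of_nonneg hneg (by positivity)).trans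
      (boxRatio_nonneg (by positivity) hδ₁)
  calc (((A ∩ Icc 0 N).ncard : ℝ) - k) / (N + 3)
      = (((A ∩ Icc 0 N).ncard : ℝ) - k) * Real.log q / ((N + 3) * Real.log q) :=
        (mul_div_mul_right _ _ hlogq.ne').symm
    _ ≤ boxRatio E δ := div_le_div₀ (Real.log_natCast_nonneg _) hlogN
        (neg_pos.2 (Real.log_neg (by positivity) hδ₁)) hlogδ

lemma upperDensity_le_ubdim (hq : 1 < q) {E : Set ℝ} (hE : IsBounded E) {a : ℕ → Fin q}
    {k : ℕ} (hsub : freeDigitSet a (A ∩ Ici k) ⊆ closure E) : upperDensity A ≤ ubdim E := by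
  have hq' : (1 : ℝ) < q := by exact_mod_cast hq
  have hscale : Tendsto (fun N : ℕ => ((q : ℝ) ^ (N + 1))⁻¹ / 3) atTop (𝓝[>] 0) := by
    refine tendsto_nhdsWithin_iff.2
      ⟨?_, Eventually.of_forall fun N => mem_Ioi.2 (by positivity)⟩
    simpa using (tendsto_inv_atTop_zero.comp ((tendsto_pow_atTop_atTop_of_one_lt hq').comp
      (tendsto_add_atTop_nat 1))).div_const 3
  have ht₂ := upperDensity_le_two A
  refine le_of_forall_pos_le_add fun ε hε => sub_le_iff_le_add.1 ?_
  refine le_limsup_of_frequently_le (hscale.frequently ?_) (isBoundedUnder_boxRatio hE)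
  have hdens : ∃ᶠ N in atTop, upperDensity A - ε / 2 < partialDensity A N :=
    frequently_lt_of_lt_limsup (isCoboundedUnder_partialDensity A)
      (by rw [upperDensity]; linarith)
  -- `k + 6` absorbs the `k` fixed digits and, as `upperDensity A ≤ 2`, the `+ 3` in the
  -- denominator.
  refine (hdens.and_eventually (eventually_ge_atTop (⌈2 * (k + 6) / ε⌉₊ + 1))).mono
    fun N ⟨hd, hN⟩ => le_trans ?_ (div_le_boxRatio_of_freeDigitSet_subset A hq hE hsub N)
  have hN₁ : (1 : ℝ) ≤ N := by exact_mod_cast (Nat.le_add_left 1 _).trans hN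
  have hNε : 2 * (k + 6) ≤ ε * N := by
    have := (Nat.le_ceil (2 * (k + 6) / ε)).trans (Nat.cast_le.2 (Nat.le_of_succ_le hN))
    rw [div_le_iff₀ hε] at this
    linarith
  rw [partialDensity, lt_div_iff₀ (by linarith)] at hd
  rw [le_div_iff₀ (by linarith)]
  nlinarith

lemma exists_upperDensity_le_ubdim (hq : 1 < q) {C : ℕ → Set ℝ}
    (hcov : digitSet q A ⊆ ⋃ i, C i) (hC : ∀ i, IsBounded (C i)) :
    ∃ i, upperDensity A ≤ ubdim (C i) := by
  have : NeZero q := ⟨by omega⟩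
  rw [digitSet_eq_freeDigitSet] at hcov
  obtain ⟨i, a, k, hsub⟩ := exists_freeDigitSet_subset_closure 0 A hq hcov
  exact ⟨i, upperDensity_le_ubdim A hq (hC i) hsub⟩

end BoxDimension

lemma pdim_eq_of_forall_exists_le_ubdim {X : Type*} [PseudoMetricSpace X] {E : Set X} {t : ℝ}
    (hE : IsBounded E) (hle : ubdim E ≤ t)
    (hge : ∀ C : ℕ → Set X, E ⊆ ⋃ i, C i → (∀ i, IsBounded (C i)) → ∃ i, t ≤ ubdim (C i)) :
    pdim E = t := by
  refine IsLeast.csInf_eq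
    ⟨⟨fun _ => E, subset_iUnion (fun _ : ℕ => E) 0, fun _ => hE, fun _ => hle⟩, ?_⟩
  rintro s ⟨C, hcov, hC, hs⟩
  obtain ⟨i, hi⟩ := hge C hcov hC
  exact hi.trans (hs i)

theorem stmt16 (q : ℕ) (hq : 2 ≤ q) (A : Set ℕ) (t : ℝ)
    (ht : Filter.limsup (fun N : ℕ => ((A ∩ Set.Icc 0 N).ncard : ℝ) / N) Filter.atTop = t) :
    IsCompact (digitSet q A) ∧ digitSet q A ⊆ Set.Icc (0:ℝ) 1 ∧
      pdim (digitSet q A) = t ∧ ubdim (digitSet q A) = t := by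
  have : NeZero q := ⟨by omega⟩
  have ht : upperDensity A = t := ht
  have hF : digitSet q A = freeDigitSet 0 A := digitSet_eq_freeDigitSet A
  have hbdd : IsBounded (digitSet q A) := hF ▸ (isCompact_freeDigitSet 0 A).isBounded
  have hge : ∀ C : ℕ → Set ℝ, digitSet q A ⊆ ⋃ i, C i → (∀ i, IsBounded (C i)) →
      ∃ i, t ≤ ubdim (C i) := fun C hcov hC => ht ▸ exists_upperDensity_le_ubdim A hq hcov hC
  have hubdim : ubdim (digitSet q A) = t := by
    refine le_antisymm (ht ▸ ubdim_digitSet_le A hq) ?_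
    obtain ⟨_, hi⟩ := hge (fun _ => digitSet q A) (subset_iUnion (fun _ : ℕ => _) 0)
      fun _ => hbdd
    exact hi
  exact ⟨hF ▸ isCompact_freeDigitSet 0 A, hF ▸ freeDigitSet_subset_Icc 0 A,
    pdim_eq_of_forall_exists_le_ubdim hbdd hubdim.le hge, hubdim⟩
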